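/- The procedure EMB(X) of the paper, which recursively decides embeddability of a triangulated compact orientable 3-manifold X with boundary into S^3, terminates: along every branch of the recursion tree, the lexicographically ordered vector g_≥(X) of genera of boundary components (sorted in non-increasing order, padded with zeros) does not increase under passing to connected components or prime summands, and strictly decreases under a boundary compression or attachment of a 2-handle along an essential boundary curve. -/

import Mathlib

/-!
Zero entries are invisible after padding, so `g_≥` depends only on the multiplicities of the
positive genera, and comparing two padded non-increasing vectors lexicographically amounts to
comparing these multiplicity functions colexicographically: at the largest genus where the
multiplicities differ, the vector with more copies of it is the larger one. This order on
`ℕ →₀ ℕ` is linear and well-founded (`Finsupp.Colex`). Passing to a sub-multiset lowers all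
multiplicities, and a boundary step replaces one genus `g ≥ 1` by smaller ones, which lowers the
multiplicity of `g` and fixes all multiplicities above it.
-/

/-- The multiset of genera of boundary components, sorted in non-increasing order. -/
def sortedDesc (s : Multiset ℕ) : List ℕ := (Multiset.sort s (· ≤ ·)).reverse

/-- Pad a list with zeros on the right to length n. -/
def pad (l : List ℕ) (n : ℕ) : List ℕ := l ++ List.replicate (n - l.length) 0

/-- Strict lexicographic order on genus vectors g_≥: sort in non-increasing order, pad the
shorter with zeros, compare lexicographically. -/
def gvecLT (s t : Multiset ℕ) : Prop :=
  List.Lex (· < ·)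
    (pad (sortedDesc s) (max (Multiset.card s) (Multiset.card t)))
    (pad (sortedDesc t) (max (Multiset.card s) (Multiset.card t)))

/-- Non-strict version of the order on genus vectors (equality up to zero padding). -/
def gvecLE (s t : Multiset ℕ) : Prop :=
  gvecLT s t ∨
    pad (sortedDesc s) (max (Multiset.card s) (Multiset.card t)) =
      pad (sortedDesc t) (max (Multiset.card s) (Multiset.card t))

/-- The effect on the multiset of boundary genera of a boundary compression or of
attaching a 2-handle along an essential boundary curve: exactly one boundary component of
genus g ≥ 1 is affected; it is either split into two components of nonzero genus whose
genera sum to g, or it remains in one piece with its genus decreased by one. -/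
def BoundaryStep (s t : Multiset ℕ) : Prop :=
  ∃ g ∈ s, 1 ≤ g ∧
    ((∃ g₁ g₂, 1 ≤ g₁ ∧ 1 ≤ g₂ ∧ g₁ + g₂ = g ∧ t = g₁ ::ₘ g₂ ::ₘ s.erase g) ∨
      t = (g - 1) ::ₘ s.erase g)

lemma sortedGE_sortedDesc (s : Multiset ℕ) : (sortedDesc s).SortedGE :=
  (Multiset.pairwise_sort s (· ≤ ·)).sortedLE.reverse

@[simp]
lemma coe_sortedDesc (s : Multiset ℕ) : (sortedDesc s : Multiset ℕ) = s := by
  simp [sortedDesc]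

@[simp]
lemma length_sortedDesc (s : Multiset ℕ) : (sortedDesc s).length = Multiset.card s := by
  simp [sortedDesc]

lemma mem_sortedDesc {s : Multiset ℕ} {x : ℕ} : x ∈ sortedDesc s ↔ x ∈ s := by
  simp [sortedDesc]

lemma sortedDesc_add {a b : Multiset ℕ} (hab : ∀ x ∈ a, ∀ y ∈ b, y ≤ x) :
    sortedDesc (a + b) = sortedDesc a ++ sortedDesc b := by
  refine List.Perm.eq_of_sortedGE (sortedGE_sortedDesc _) ?_
    (Multiset.coe_eq_coe.1 (by simp [← Multiset.coe_add]))
  refine List.Pairwise.sortedGE (List.pairwise_append.2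
    ⟨(sortedGE_sortedDesc a).pairwise, (sortedGE_sortedDesc b).pairwise, ?_⟩)
  exact fun x hx y hy => hab x (mem_sortedDesc.1 hx) y (mem_sortedDesc.1 hy)

lemma sortedDesc_replicate (c k : ℕ) :
    sortedDesc (Multiset.replicate c k) = List.replicate c k :=
  List.eq_replicate_iff.2
    ⟨by simp, fun _ hx => Multiset.eq_of_mem_replicate (mem_sortedDesc.1 hx)⟩

lemma sortedDesc_eq_append (s : Multiset ℕ) (k : ℕ) :
    sortedDesc s = sortedDesc (s.filter (k < ·)) ++
      (List.replicate (s.count k) k ++ sortedDesc (s.filter (· < k))) := by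
  have hs : s = s.filter (k < ·) + (Multiset.replicate (s.count k) k + s.filter (· < k)) := by
    ext j
    simp only [Multiset.count_add, Multiset.count_filter, Multiset.count_replicate]
    split_ifs <;> subst_vars <;> omega
  conv_lhs => rw [hs]
  rw [sortedDesc_add, sortedDesc_add, sortedDesc_replicate]
  all_goals
    intro x hx y hy
    simp only [Multiset.mem_add, Multiset.mem_filter, Multiset.mem_replicate] at hx hy
    omega

lemma pad_sortedDesc_eq_pad_filter_pos {s : Multiset ℕ} {n : ℕ} (hs : Multiset.card s ≤ n) :
    pad (sortedDesc s) n = pad (sortedDesc (s.filter (0 < ·))) n := by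
  have hneg : s.filter (· < 0) = 0 := Multiset.filter_eq_nil.2 fun _ _ => Nat.not_lt_zero _
  have hsplit := sortedDesc_eq_append s 0
  rw [hneg, show sortedDesc 0 = [] by simp [sortedDesc], List.append_nil] at hsplit
  have hlen := congrArg List.length hsplit
  rw [length_sortedDesc, List.length_append, List.length_replicate] at hlen
  rw [pad, pad, hsplit, List.append_assoc, ← List.replicate_add]
  congr 2
  rw [List.length_append, List.length_replicate]
  omega

lemma lex_replicate_append {k c c' : ℕ} {l l' : List ℕ} (hc : c < c') (hl : ∀ x ∈ l, x < k) :
    List.Lex (· < ·) (List.replicate c k ++ l) (List.replicate c' k ++ l') := by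
  obtain ⟨d, rfl⟩ := Nat.exists_eq_add_of_lt hc
  rw [add_assoc, List.replicate_add, List.append_assoc]
  refine List.Lex.append_left _ ?_ _
  cases l with
  | nil => exact List.Lex.nil
  | cons x l => exact List.Lex.rel (hl x List.mem_cons_self)

noncomputable def genusColex (s : Multiset ℕ) : Colex (ℕ →₀ ℕ) :=
  toColex (Multiset.toFinsupp (s.filter (0 < ·)))

lemma genusColex_apply (s : Multiset ℕ) (j : ℕ) :
    ofColex (genusColex s) j = if 0 < j then s.count j else 0 := by
  simp [genusColex, Multiset.count_filter]

lemma lex_pad_sortedDesc_of_genusColex_lt {s t : Multiset ℕ} (h : genusColex s < genusColex t)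
    (n : ℕ) : List.Lex (· < ·) (pad (sortedDesc s) n) (pad (sortedDesc t) n) := by
  obtain ⟨k, hagree, hk⟩ := Finsupp.Colex.lt_iff.1 h
  simp only [genusColex_apply] at hagree hk
  have hk0 : 0 < k := by by_contra h0; simp [h0] at hk
  rw [if_pos hk0, if_pos hk0] at hk
  have habove : s.filter (k < ·) = t.filter (k < ·) := by
    ext j
    simp only [Multiset.count_filter]
    split_ifs with hj
    · simpa [hk0.trans hj] using hagree j hj
    · rfl
  rw [pad, pad, sortedDesc_eq_append s k, sortedDesc_eq_append t k, habove]
  simp only [List.append_assoc]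
  refine List.Lex.append_left _ (lex_replicate_append hk ?_) _
  intro x hx
  rcases List.mem_append.1 hx with hx | hx
  · exact (Multiset.mem_filter.1 (mem_sortedDesc.1 hx)).2
  · exact (List.eq_of_mem_replicate hx).trans_lt hk0

lemma pad_sortedDesc_eq_of_genusColex_eq {s t : Multiset ℕ} {n : ℕ}
    (h : genusColex s = genusColex t) (hs : Multiset.card s ≤ n) (ht : Multiset.card t ≤ n) :
    pad (sortedDesc s) n = pad (sortedDesc t) n := by
  rw [pad_sortedDesc_eq_pad_filter_pos hs, pad_sortedDesc_eq_pad_filter_pos ht,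
    Multiset.toFinsupp.injective (toColex_inj.1 h)]

lemma gvecLT_iff_genusColex_lt {s t : Multiset ℕ} : gvecLT s t ↔ genusColex s < genusColex t := by
  refine ⟨fun h => ?_, fun h => lex_pad_sortedDesc_of_genusColex_lt h _⟩
  rw [gvecLT] at h
  by_contra hnot
  rcases (not_lt.1 hnot).lt_or_eq with hlt | heq
  · exact asymm h (lex_pad_sortedDesc_of_genusColex_lt hlt _)
  · rw [pad_sortedDesc_eq_of_genusColex_eq heq.symm (le_max_left _ _) (le_max_right _ _)] at h
    exact asymm h h

lemma gvecLE_of_genusColex_le {s t : Multiset ℕ} (h : genusColex s ≤ genusColex t) :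
    gvecLE s t :=
  h.lt_or_eq.imp gvecLT_iff_genusColex_lt.2
    fun heq => pad_sortedDesc_eq_of_genusColex_eq heq (le_max_left _ _) (le_max_right _ _)

lemma genusColex_mono : Monotone genusColex := fun _ _ h =>
  Finsupp.toColex_monotone (Multiset.toFinsupp_strictMono.monotone (Multiset.filter_le_filter _ h))

lemma genusColex_add_erase_lt {s u : Multiset ℕ} {g : ℕ} (hg : g ∈ s) (hg0 : 0 < g)
    (hu : ∀ x ∈ u, x < g) : genusColex (u + s.erase g) < genusColex s := by
  have hu_count : ∀ j, g ≤ j → u.count j = 0 := fun j hj =>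
    Multiset.count_eq_zero.2 fun hj' => (hu j hj').not_ge hj
  refine Finsupp.Colex.lt_iff.2 ⟨g, fun j hj => ?_, ?_⟩
  · simp [genusColex_apply, hu_count j hj.le, Multiset.count_erase_of_ne hj.ne']
  · simp [genusColex_apply, hg0, hu_count g le_rfl, Multiset.count_erase_self,
      Multiset.count_pos.2 hg]

lemma genusColex_lt_of_boundaryStep {s t : Multiset ℕ} (h : BoundaryStep s t) :
    genusColex t < genusColex s := by
  obtain ⟨g, hg, hg1, ⟨g₁, g₂, h₁, h₂, hsum, rfl⟩ | rfl⟩ := h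
  · have hlt : ∀ x ∈ ({g₁, g₂} : Multiset ℕ), x < g := by
      simp only [Multiset.insert_eq_cons, Multiset.mem_cons, Multiset.mem_singleton,
        forall_eq_or_imp, forall_eq]
      omega
    simpa using genusColex_add_erase_lt hg hg1 hlt
  · have hlt : ∀ x ∈ ({g - 1} : Multiset ℕ), x < g := by
      simpa using Nat.sub_lt hg1 Nat.one_pos
    simpa using genusColex_add_erase_lt hg hg1 hlt

/-- termination of the procedure EMB(X). The lexicographically ordered
vector g_≥(X) of genera of boundary components (sorted non-increasingly, padded with
zeros): (a) does not increase when passing to a connected component or a prime summand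
(whose boundary components form a sub-multiset of those of X); (b) strictly decreases
under a boundary compression or the attachment of a 2-handle along an essential boundary
curve; and (c) the strict order on genus vectors is well-founded, so every branch of the
recursion tree, which has finite branching, is finite and the procedure terminates. -/
theorem emb_procedure_terminates :
    (∀ s t : Multiset ℕ, t ≤ s → gvecLE t s) ∧
    (∀ s t : Multiset ℕ, BoundaryStep s t → gvecLT t s) ∧
    WellFounded gvecLT :=
  ⟨fun _ _ h => gvecLE_of_genusColex_le (genusColex_mono h),
    fun _ _ h => gvecLT_iff_genusColex_lt.2 (genusColex_lt_of_boundaryStep h),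
    Subrelation.wf gvecLT_iff_genusColex_lt.1 (InvImage.wf genusColex wellFounded_lt)⟩
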